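/- arXiv:2102.00510 — 5 statements merged into one kernel-verified Lean document; each statement's English description precedes it below -/
import Mathlib

section
/- The set of subprobability valuations on a topological space, ordered pointwise (the stochastic order), forms a pointed directed-complete partial order: the constantly-zero valuation is the least element, and the supremum of a directed family of valuations is given by the pointwise supremum, which is again a subprobability valuation. -/
/-- A subprobability valuation on a topological space `X`: a `[0,1]`-valued,
strict, monotone, Scott-continuous (on directed families of opens), modular
function on the open sets of `X`. -/
structure SubVal (X : Type*) [TopologicalSpace X] where
  v : Set X → ℝ
  nonneg : ∀ U : Set X, IsOpen U → 0 ≤ v U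
  le_one : ∀ U : Set X, IsOpen U → v U ≤ 1
  strict : v ∅ = 0
  mono : ∀ ⦃U V : Set X⦄, IsOpen U → IsOpen V → U ⊆ V → v U ≤ v V
  cont : ∀ D : Set (Set X), (∀ U ∈ D, IsOpen U) → D.Nonempty →
    DirectedOn (· ⊆ ·) D → v (⋃₀ D) = sSup (v '' D)
  modular : ∀ U V : Set X, IsOpen U → IsOpen V →
    v U + v V = v (U ∪ V) + v (U ∩ V)

/-- The stochastic order on subprobability valuations: pointwise comparison on opens. -/
def svle {X : Type*} [TopologicalSpace X] (ν₁ ν₂ : SubVal X) : Prop :=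
  ∀ U : Set X, IsOpen U → ν₁.v U ≤ ν₂.v U

/-- The subprobability valuations on a topological space, in the stochastic order,
form a pointed dcpo: the constantly-zero valuation is least, and every directed
family has a supremum, computed pointwise on opens (which is again a valuation). -/
theorem subVal_pointed_dcpo (X : Type*) [TopologicalSpace X] :
    (∃ z : SubVal X, (∀ U : Set X, z.v U = 0) ∧ ∀ ν : SubVal X, svle z ν) ∧
    (∀ d : Set (SubVal X), d.Nonempty → DirectedOn svle d →
      ∃ s : SubVal X,
        (∀ U : Set X, IsOpen U → s.v U = sSup ((fun ν : SubVal X => ν.v U) '' d)) ∧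
        (∀ ν ∈ d, svle ν s) ∧
        (∀ ub : SubVal X, (∀ ν ∈ d, svle ν ub) → svle s ub)) := by
  constructor
  · refine ⟨⟨fun _ => 0, fun _ _ => le_refl 0, fun _ _ => zero_le_one, rfl,
      fun _ _ _ _ _ => le_refl 0, ?_, fun _ _ _ _ => rfl⟩, fun _ => rfl,
      fun ν U hU => ν.nonneg U hU⟩
    intro D _ hDne _
    simp [Set.Nonempty.image_const hDne]
  · intro d hd hdir
    -- the pointwise sup
    set F : Set X → ℝ := fun U => sSup ((fun ν : SubVal X => ν.v U) '' d) with hF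
    have hbdd : ∀ U : Set X, IsOpen U → BddAbove ((fun ν : SubVal X => ν.v U) '' d) := by
      intro U hU
      exact ⟨1, by rintro x ⟨ν, hν, rfl⟩; exact ν.le_one U hU⟩
    have hne : ∀ U : Set X, ((fun ν : SubVal X => ν.v U) '' d).Nonempty :=
      fun U => hd.image _
    have hle : ∀ U : Set X, IsOpen U → ∀ ν ∈ d, ν.v U ≤ F U := fun U hU ν hν =>
      le_csSup (hbdd U hU) ⟨ν, hν, rfl⟩
    have hsup_le : ∀ U : Set X, ∀ c : ℝ, (∀ ν ∈ d, ν.v U ≤ c) → F U ≤ c := by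
      intro U c hc
      apply csSup_le (hne U)
      rintro x ⟨ν, hν, rfl⟩; exact hc ν hν
    have hnonneg : ∀ U : Set X, IsOpen U → 0 ≤ F U := by
      intro U hU
      obtain ⟨ν, hν⟩ := hd
      exact le_trans (ν.nonneg U hU) (hle U hU ν hν)
    have hle_one : ∀ U : Set X, IsOpen U → F U ≤ 1 :=
      fun U hU => hsup_le U 1 (fun ν _ => ν.le_one U hU)
    have hstrict : F ∅ = 0 := by
      apply le_antisymm
      · exact hsup_le ∅ 0 (fun ν _ => le_of_eq ν.strict)
      · exact hnonneg ∅ isOpen_empty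
    have hmono : ∀ ⦃U V : Set X⦄, IsOpen U → IsOpen V → U ⊆ V → F U ≤ F V := by
      intro U V hU hV hUV
      exact hsup_le U (F V) (fun ν hν => le_trans (ν.mono hU hV hUV) (hle V hV ν hν))
    -- additivity of sSup over the directed family
    have hadd : ∀ U V : Set X, IsOpen U → IsOpen V →
        F U + F V = sSup ((fun ν : SubVal X => ν.v U + ν.v V) '' d) := by
      intro U V hU hV
      have hbdd2 : BddAbove ((fun ν : SubVal X => ν.v U + ν.v V) '' d) := by
        refine ⟨2, ?_⟩
        rintro x ⟨ν, hν, rfl⟩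
        show ν.v U + ν.v V ≤ 2
        have := add_le_add (ν.le_one U hU) (ν.le_one V hV)
        linarith
      apply le_antisymm
      · have h1 : F U ≤ sSup ((fun ν : SubVal X => ν.v U + ν.v V) '' d) - F V := by
          apply hsup_le
          intro ν hν
          rw [le_sub_iff_add_le, add_comm, ← le_sub_iff_add_le]
          apply hsup_le
          intro μ hμ
          rw [le_sub_iff_add_le]
          obtain ⟨κ, hκ, hνκ, hμκ⟩ := hdir ν hν μ hμ
          calc μ.v V + ν.v U ≤ κ.v V + κ.v U := add_le_add (hμκ V hV) (hνκ U hU)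
            _ = κ.v U + κ.v V := add_comm _ _
            _ ≤ _ := le_csSup hbdd2 ⟨κ, hκ, rfl⟩
        linarith
      · apply csSup_le ((hd).image _)
        rintro x ⟨ν, hν, rfl⟩
        exact add_le_add (hle U hU ν hν) (hle V hV ν hν)
    have hmodular : ∀ U V : Set X, IsOpen U → IsOpen V →
        F U + F V = F (U ∪ V) + F (U ∩ V) := by
      intro U V hU hV
      rw [hadd U V hU hV, hadd (U ∪ V) (U ∩ V) (hU.union hV) (hU.inter hV)]
      congr 1
      ext x
      constructor
      · rintro ⟨ν, hν, rfl⟩; exact ⟨ν, hν, (ν.modular U V hU hV).symm⟩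
      · rintro ⟨ν, hν, rfl⟩; exact ⟨ν, hν, ν.modular U V hU hV⟩
    have hcont : ∀ D : Set (Set X), (∀ U ∈ D, IsOpen U) → D.Nonempty →
        DirectedOn (· ⊆ ·) D → F (⋃₀ D) = sSup (F '' D) := by
      intro D hDopen hDne hDdir
      have hUopen : IsOpen (⋃₀ D) := isOpen_sUnion hDopen
      have hbddF : BddAbove (F '' D) := by
        refine ⟨1, ?_⟩
        rintro x ⟨U, hU, rfl⟩
        exact hle_one U (hDopen U hU)
      apply le_antisymm
      · apply hsup_le
        intro ν hν
        rw [ν.cont D hDopen hDne hDdir]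
        apply csSup_le (hDne.image _)
        rintro x ⟨U, hU, rfl⟩
        exact le_trans (hle U (hDopen U hU) ν hν) (le_csSup hbddF ⟨U, hU, rfl⟩)
      · apply csSup_le (hDne.image _)
        rintro x ⟨U, hU, rfl⟩
        exact hmono (hDopen U hU) hUopen (Set.subset_sUnion_of_mem hU)
    refine ⟨⟨F, hnonneg, hle_one, hstrict, hmono, hcont, hmodular⟩,
      fun _ _ => rfl, fun ν hν U hU => hle U hU ν hν,
      fun ub hub U hU => hsup_le U (ub.v U) (fun ν hν => hub ν hν U hU)⟩
end

section
/- For a fixed Scott-continuous function f : D → [0,1] on a dcpo D, the Choquet integral ν ↦ ∫ f dν, defined as the Riemann integral ∫₀¹ ν(f⁻¹((t,1])) dt, is Scott-continuous as a function of the subprobability valuation ν (with valuations in the stochastic order). -/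
/-- A set is Scott-open if it is an upper set inaccessible by suprema of
directed sets. -/
def ScottOpen {α : Type*} [Preorder α] (U : Set α) : Prop :=
  (∀ ⦃a b : α⦄, a ≤ b → a ∈ U → b ∈ U) ∧
  ∀ d : Set α, d.Nonempty → DirectedOn (· ≤ ·) d → ∀ x : α, IsLUB d x → x ∈ U →
    (d ∩ U).Nonempty

/-- A preorder is a dcpo when every nonempty directed subset has a least upper
bound. -/
def IsDcpo (α : Type*) [Preorder α] : Prop :=
  ∀ d : Set α, d.Nonempty → DirectedOn (· ≤ ·) d → ∃ x : α, IsLUB d x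

/-- A subprobability valuation on a dcpo (with its Scott topology): a
`[0,1]`-valued, strict, monotone, Scott-continuous, modular function on
Scott-open sets. -/
structure SVal (α : Type*) [Preorder α] where
  v : Set α → ℝ
  nonneg : ∀ U : Set α, ScottOpen U → 0 ≤ v U
  le_one : ∀ U : Set α, ScottOpen U → v U ≤ 1
  strict : v ∅ = 0
  mono : ∀ ⦃U V : Set α⦄, ScottOpen U → ScottOpen V → U ⊆ V → v U ≤ v V
  cont : ∀ D : Set (Set α), (∀ U ∈ D, ScottOpen U) → D.Nonempty →
    DirectedOn (· ⊆ ·) D → v (⋃₀ D) = sSup (v '' D)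
  modular : ∀ U V : Set α, ScottOpen U → ScottOpen V →
    v U + v V = v (U ∪ V) + v (U ∩ V)

/-- The stochastic order on subprobability valuations. -/
instance SVal.instPreorder {α : Type*} [Preorder α] : Preorder (SVal α) where
  le ν₁ ν₂ := ∀ U : Set α, ScottOpen U → ν₁.v U ≤ ν₂.v U
  le_refl ν := fun _ _ => le_refl _
  le_trans ν₁ ν₂ ν₃ h₁ h₂ := fun U hU => le_trans (h₁ U hU) (h₂ U hU)

/-- The Choquet integral of `f` against the set-function `νv`:
`∫₀¹ νv (f⁻¹(t,∞)) dt`. -/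
noncomputable def choquet {α : Type*} (νv : Set α → ℝ) (f : α → ℝ) : ℝ :=
  ∫ t in (0:ℝ)..1, νv (f ⁻¹' Set.Ioi t)

/-! ### Auxiliary lemmas on Scott-open sets -/

lemma scottOpen_empty {α : Type*} [Preorder α] : ScottOpen (∅ : Set α) :=
  ⟨fun _ _ _ h => h.elim, fun _ _ _ _ _ h => h.elim⟩

lemma ScottOpen.union {α : Type*} [Preorder α] {U V : Set α}
    (hU : ScottOpen U) (hV : ScottOpen V) : ScottOpen (U ∪ V) := by
  constructor
  · rintro a b hab (h | h)
    · exact Or.inl (hU.1 hab h)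
    · exact Or.inr (hV.1 hab h)
  · rintro d hd hdir x hx (h | h)
    · obtain ⟨y, hy, hyU⟩ := hU.2 d hd hdir x hx h
      exact ⟨y, hy, Or.inl hyU⟩
    · obtain ⟨y, hy, hyV⟩ := hV.2 d hd hdir x hx h
      exact ⟨y, hy, Or.inr hyV⟩

lemma ScottOpen.inter {α : Type*} [Preorder α] {U V : Set α}
    (hU : ScottOpen U) (hV : ScottOpen V) : ScottOpen (U ∩ V) := by
  constructor
  · rintro a b hab ⟨h1, h2⟩
    exact ⟨hU.1 hab h1, hV.1 hab h2⟩
  · rintro d hd hdir x hx ⟨h1, h2⟩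
    obtain ⟨y, hy, hyU⟩ := hU.2 d hd hdir x hx h1
    obtain ⟨z, hz, hzV⟩ := hV.2 d hd hdir x hx h2
    obtain ⟨w, hw, hyw, hzw⟩ := hdir y hy z hz
    exact ⟨w, hw, hU.1 hyw hyU, hV.1 hzw hzV⟩

lemma scottOpen_sUnion {α : Type*} [Preorder α] {𝒟 : Set (Set α)}
    (h : ∀ U ∈ 𝒟, ScottOpen U) : ScottOpen (⋃₀ 𝒟) := by
  constructor
  · rintro a b hab ⟨U, hU, haU⟩
    exact ⟨U, hU, (h U hU).1 hab haU⟩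
  · rintro d hd hdir x hx ⟨U, hU, hxU⟩
    obtain ⟨y, hy, hyU⟩ := (h U hU).2 d hd hdir x hx hxU
    exact ⟨y, hy, U, hU, hyU⟩

/-! ### Directedness and suprema lemmas -/

lemma exists_ub_of_finite {β : Type*} [Preorder β] {S : Set β} (hne : S.Nonempty)
    (hdir : DirectedOn (· ≤ ·) S) (g : ℕ → β) (hg : ∀ i, g i ∈ S) :
    ∀ n : ℕ, ∃ z ∈ S, ∀ i < n, g i ≤ z := by
  intro n
  induction n with
  | zero => exact ⟨hne.choose, hne.choose_spec, fun i h => absurd h (Nat.not_lt_zero i)⟩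
  | succ n ih =>
    obtain ⟨z, hz, hzle⟩ := ih
    obtain ⟨w, hw, hzw, hgw⟩ := hdir z hz (g n) (hg n)
    refine ⟨w, hw, fun i hi => ?_⟩
    rcases Nat.lt_succ_iff_lt_or_eq.mp hi with h | h
    · exact (hzle i h).trans hzw
    · exact h ▸ hgw

lemma csSup_image_add_directed {β : Type*} [Preorder β] {S : Set β} (hne : S.Nonempty)
    (hdir : DirectedOn (· ≤ ·) S) (p q : β → ℝ)
    (hpm : ∀ μ ∈ S, ∀ ρ ∈ S, μ ≤ ρ → p μ ≤ p ρ)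
    (hqm : ∀ μ ∈ S, ∀ ρ ∈ S, μ ≤ ρ → q μ ≤ q ρ)
    (hpb : ∀ μ ∈ S, p μ ≤ 1) (hqb : ∀ μ ∈ S, q μ ≤ 1) :
    sSup (p '' S) + sSup (q '' S) = sSup ((fun μ => p μ + q μ) '' S) := by
  have hbs : BddAbove ((fun μ => p μ + q μ) '' S) := by
    refine ⟨2, ?_⟩
    rintro _ ⟨μ, hμ, rfl⟩
    have := hpb μ hμ; have := hqb μ hμ; dsimp; linarith
  have hbp : BddAbove (p '' S) := ⟨1, by rintro _ ⟨μ, hμ, rfl⟩; exact hpb μ hμ⟩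
  have hbq : BddAbove (q '' S) := ⟨1, by rintro _ ⟨μ, hμ, rfl⟩; exact hqb μ hμ⟩
  apply le_antisymm
  · have key : ∀ a ∈ p '' S, ∀ b ∈ q '' S, a + b ≤ sSup ((fun μ => p μ + q μ) '' S) := by
      rintro _ ⟨μ, hμ, rfl⟩ _ ⟨ρ, hρ, rfl⟩
      obtain ⟨τ, hτ, hμτ, hρτ⟩ := hdir μ hμ ρ hρ
      calc p μ + q ρ ≤ p τ + q τ :=
            add_le_add (hpm μ hμ τ hτ hμτ) (hqm ρ hρ τ hτ hρτ)
        _ ≤ _ := le_csSup hbs ⟨τ, hτ, rfl⟩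
    have h1 : sSup (p '' S) ≤ sSup ((fun μ => p μ + q μ) '' S) - sSup (q '' S) := by
      refine csSup_le (hne.image _) fun a ha => ?_
      rw [le_sub_iff_add_le, ← le_sub_iff_add_le']
      exact csSup_le (hne.image _) fun b hb => le_sub_iff_add_le'.mpr (key a ha b hb)
    linarith
  · refine csSup_le (hne.image _) ?_
    rintro _ ⟨μ, hμ, rfl⟩
    exact add_le_add (le_csSup hbp ⟨μ, hμ, rfl⟩) (le_csSup hbq ⟨μ, hμ, rfl⟩)

/-! ### The pointwise supremum of a directed family of valuations -/

/-- Pointwise supremum of a directed family of subprobability valuations. -/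
noncomputable def supVal {α : Type*} [Preorder α] (S : Set (SVal α)) (hne : S.Nonempty)
    (hdir : DirectedOn (· ≤ ·) S) : SVal α := by
  have hAne : ∀ U : Set α, ((fun μ : SVal α => μ.v U) '' S).Nonempty := fun U => hne.image _
  have hAbdd : ∀ U : Set α, ScottOpen U → BddAbove ((fun μ : SVal α => μ.v U) '' S) :=
    fun U hU => ⟨1, by rintro _ ⟨μ, hμ, rfl⟩; exact μ.le_one U hU⟩
  have hAle1 : ∀ U : Set α, ScottOpen U → sSup ((fun μ : SVal α => μ.v U) '' S) ≤ 1 :=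
    fun U hU => csSup_le (hAne U) (by rintro _ ⟨μ, hμ, rfl⟩; exact μ.le_one U hU)
  refine
  { v := fun U => sSup ((fun μ : SVal α => μ.v U) '' S)
    nonneg := fun U hU => ?_
    le_one := fun U hU => hAle1 U hU
    strict := ?_
    mono := fun U V hU hV hUV => ?_
    cont := fun 𝒟 hop h𝒟ne h𝒟dir => ?_
    modular := fun U V hU hV => ?_ }
  · obtain ⟨μ₀, hμ₀⟩ := hne
    exact le_trans (μ₀.nonneg U hU) (le_csSup (hAbdd U hU) ⟨μ₀, hμ₀, rfl⟩)
  · obtain ⟨μ₀, hμ₀⟩ := hne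
    apply le_antisymm
    · refine csSup_le (hAne ∅) ?_
      rintro _ ⟨μ, hμ, rfl⟩
      exact le_of_eq μ.strict
    · exact le_csSup (hAbdd ∅ scottOpen_empty) ⟨μ₀, hμ₀, μ₀.strict⟩
  · refine csSup_le (hAne U) ?_
    rintro _ ⟨μ, hμ, rfl⟩
    exact le_trans (μ.mono hU hV hUV) (le_csSup (hAbdd V hV) ⟨μ, hμ, rfl⟩)
  · have hsU : ScottOpen (⋃₀ 𝒟) := scottOpen_sUnion hop
    apply le_antisymm
    · refine csSup_le (hAne _) ?_
      rintro _ ⟨μ, hμ, rfl⟩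
      dsimp only
      rw [μ.cont 𝒟 hop h𝒟ne h𝒟dir]
      refine csSup_le (h𝒟ne.image _) ?_
      rintro _ ⟨U, hU, rfl⟩
      refine le_trans (le_csSup (hAbdd U (hop U hU)) ⟨μ, hμ, rfl⟩)
        (le_csSup ⟨1, ?_⟩ ⟨U, hU, rfl⟩)
      rintro _ ⟨W, hW, rfl⟩
      exact hAle1 W (hop W hW)
    · refine csSup_le (h𝒟ne.image _) ?_
      rintro _ ⟨U, hU, rfl⟩
      refine csSup_le (hAne U) ?_
      rintro _ ⟨μ, hμ, rfl⟩
      exact le_trans (μ.mono (hop U hU) hsU (Set.subset_sUnion_of_mem hU))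
        (le_csSup (hAbdd _ hsU) ⟨μ, hμ, rfl⟩)
  · have h1 := csSup_image_add_directed hne hdir (fun μ => μ.v U) (fun μ => μ.v V)
      (fun μ _ ρ _ h => h U hU) (fun μ _ ρ _ h => h V hV)
      (fun μ _ => μ.le_one U hU) (fun μ _ => μ.le_one V hV)
    have h2 := csSup_image_add_directed hne hdir (fun μ => μ.v (U ∪ V)) (fun μ => μ.v (U ∩ V))
      (fun μ _ ρ _ h => h _ (hU.union hV)) (fun μ _ ρ _ h => h _ (hU.inter hV))
      (fun μ _ => μ.le_one _ (hU.union hV)) (fun μ _ => μ.le_one _ (hU.inter hV))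
    have h3 : (fun μ : SVal α => μ.v U + μ.v V) '' S
        = (fun μ : SVal α => μ.v (U ∪ V) + μ.v (U ∩ V)) '' S :=
      Set.image_congr fun μ _ => μ.modular U V hU hV
    rw [h1, h3, ← h2]

/-! ### Riemann-sum estimates for antitone functions -/

open intervalIntegral MeasureTheory in
lemma antitone_intInt {g : ℝ → ℝ} (hg : Antitone g) (x y : ℝ) :
    IntervalIntegrable g volume x y :=
  (hg.antitoneOn _).intervalIntegrable

open intervalIntegral MeasureTheory in
lemma riemann_upper {g : ℝ → ℝ} (hg : Antitone g) {N : ℕ} (hN : 0 < N) :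
    (∫ t in (0:ℝ)..1, g t) ≤ ∑ i ∈ Finset.range N, (1/(N:ℝ)) * g ((i:ℝ)/N) := by
  have hNR : (0:ℝ) < N := Nat.cast_pos.mpr hN
  set a : ℕ → ℝ := fun i => (i : ℝ) / N with ha
  have hadj := intervalIntegral.sum_integral_adjacent_intervals
    (a := a) (μ := volume) (n := N) (fun k _ => antitone_intInt hg _ _)
  have ha0 : a 0 = 0 := by simp [ha]
  have haN : a N = 1 := by rw [ha]; field_simp
  rw [ha0, haN] at hadj
  rw [← hadj]
  refine Finset.sum_le_sum fun i _ => ?_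
  have hle : a i ≤ a (i + 1) := by
    rw [ha]; push_cast; gcongr; linarith
  have hdiff : a (i + 1) - a i = 1 / N := by
    rw [ha]; push_cast; rw [div_sub_div_same]; norm_num
  calc (∫ t in a i..a (i+1), g t) ≤ ∫ _t in a i..a (i+1), g (a i) :=
        intervalIntegral.integral_mono_on hle (antitone_intInt hg _ _)
          intervalIntegrable_const (fun t ht => hg ht.1)
    _ = (a (i+1) - a i) * g (a i) := by rw [intervalIntegral.integral_const, smul_eq_mul]
    _ = (1/(N:ℝ)) * g ((i:ℝ)/N) := by rw [hdiff, ha]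

open intervalIntegral MeasureTheory in
lemma riemann_lower {g : ℝ → ℝ} (hg : Antitone g) {N : ℕ} (hN : 0 < N) :
    ∑ i ∈ Finset.range N, (1/(N:ℝ)) * g (((i:ℝ)+1)/N) ≤ ∫ t in (0:ℝ)..1, g t := by
  have hNR : (0:ℝ) < N := Nat.cast_pos.mpr hN
  set a : ℕ → ℝ := fun i => (i : ℝ) / N with ha
  have hadj := intervalIntegral.sum_integral_adjacent_intervals
    (a := a) (μ := volume) (n := N) (fun k _ => antitone_intInt hg _ _)
  have ha0 : a 0 = 0 := by simp [ha]
  have haN : a N = 1 := by rw [ha]; field_simp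
  rw [ha0, haN] at hadj
  rw [← hadj]
  refine Finset.sum_le_sum fun i _ => ?_
  have hle : a i ≤ a (i + 1) := by
    rw [ha]; push_cast; gcongr; linarith
  have hdiff : a (i + 1) - a i = 1 / N := by
    rw [ha]; push_cast; rw [div_sub_div_same]; norm_num
  have hai : a (i + 1) = ((i:ℝ)+1)/N := by rw [ha]; push_cast; ring_nf
  calc (1/(N:ℝ)) * g (((i:ℝ)+1)/N) = (a (i+1) - a i) * g (a (i+1)) := by
        rw [hdiff, hai]
    _ = ∫ _t in a i..a (i+1), g (a (i+1)) := by
        rw [intervalIntegral.integral_const, smul_eq_mul]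
    _ ≤ ∫ t in a i..a (i+1), g t :=
        intervalIntegral.integral_mono_on hle intervalIntegrable_const
          (antitone_intInt hg _ _) (fun t ht => hg ht.2)

/-! ### The main theorem -/

/-- For a fixed Scott-continuous `f : D → [0,1]` on a dcpo `D`, the Choquet
integral `ν ↦ ∫ f dν` is Scott-continuous in the subprobability valuation `ν`
(valuations carrying the stochastic order). -/
theorem choquet_scottContinuous_in_valuation {D : Type*} [PartialOrder D]
    (hD : IsDcpo D)
    (f : D → ℝ) (hf0 : ∀ a, 0 ≤ f a) (hf1 : ∀ a, f a ≤ 1)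
    (hf : ∀ t : ℝ, ScottOpen (f ⁻¹' Set.Ioi t)) :
    ScottContinuous (fun ν : SVal D => choquet ν.v f) := by
  intro S hne hdir ν hlub
  -- abbreviations
  have hanti : ∀ μ : SVal D, Antitone (fun t => μ.v (f ⁻¹' Set.Ioi t)) := fun μ s t hst =>
    μ.mono (hf t) (hf s) (Set.preimage_mono (Set.Ioi_subset_Ioi hst))
  have hg0 : ∀ (μ : SVal D) (t : ℝ), 0 ≤ μ.v (f ⁻¹' Set.Ioi t) := fun μ t => μ.nonneg _ (hf t)
  have hg1 : ∀ (μ : SVal D) (t : ℝ), μ.v (f ⁻¹' Set.Ioi t) ≤ 1 := fun μ t => μ.le_one _ (hf t)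
  have hAne : ∀ U : Set D, ((fun μ : SVal D => μ.v U) '' S).Nonempty := fun U => hne.image _
  have hAbdd : ∀ U : Set D, ScottOpen U → BddAbove ((fun μ : SVal D => μ.v U) '' S) :=
    fun U hU => ⟨1, by rintro _ ⟨μ, hμ, rfl⟩; exact μ.le_one U hU⟩
  -- the lub agrees with pointwise sups on Scott-open sets
  have hσub : supVal S hne hdir ∈ upperBounds S :=
    fun μ hμ U hU => le_csSup (hAbdd U hU) ⟨μ, hμ, rfl⟩
  have hνσ : ν ≤ supVal S hne hdir := hlub.2 hσub
  have hval : ∀ U : Set D, ScottOpen U → ν.v U = sSup ((fun μ : SVal D => μ.v U) '' S) :=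
    fun U hU => le_antisymm (hνσ U hU)
      (csSup_le (hAne U) (by rintro _ ⟨μ, hμ, rfl⟩; exact hlub.1 hμ U hU))
  constructor
  · -- upper bound
    rintro _ ⟨μ, hμ, rfl⟩
    dsimp only
    exact intervalIntegral.integral_mono_on (by norm_num) (antitone_intInt (hanti μ) _ _)
      (antitone_intInt (hanti ν) _ _) (fun t _ => hlub.1 hμ _ (hf t))
  · -- least upper bound
    intro b hb
    refine le_of_forall_pos_le_add fun ε hε => ?_
    obtain ⟨n, hn⟩ := exists_nat_one_div_lt (half_pos hε)
    set N := n + 1 with hNdef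
    have hN : 0 < N := Nat.succ_pos n
    have hNR : (0:ℝ) < N := Nat.cast_pos.mpr hN
    have hNe : 1/(N:ℝ) < ε/2 := by rw [hNdef]; push_cast; exact hn
    have hδ : 0 < ε/2 := half_pos hε
    -- choose approximating valuations at the partition points
    have hsel : ∀ i : ℕ, ∃ μ ∈ S,
        ν.v (f ⁻¹' Set.Ioi ((i:ℝ)/N)) - (ε/2) < μ.v (f ⁻¹' Set.Ioi ((i:ℝ)/N)) := by
      intro i
      have hU := hf ((i:ℝ)/N)
      have hlt : ν.v (f ⁻¹' Set.Ioi ((i:ℝ)/N)) - (ε/2)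
          < sSup ((fun μ : SVal D => μ.v (f ⁻¹' Set.Ioi ((i:ℝ)/N))) '' S) := by
        rw [← hval _ hU]; linarith
      obtain ⟨_, ⟨μ, hμ, rfl⟩, hx⟩ := exists_lt_of_lt_csSup (hAne _) hlt
      exact ⟨μ, hμ, hx⟩
    choose μsel hμselS hμsel using hsel
    obtain ⟨μs, hμs, hμsle⟩ := exists_ub_of_finite hne hdir μsel hμselS N
    have hpt : ∀ i < N, ν.v (f ⁻¹' Set.Ioi ((i:ℝ)/N))
        ≤ μs.v (f ⁻¹' Set.Ioi ((i:ℝ)/N)) + (ε/2) := by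
      intro i hi
      have h1 := hμsel i
      have h2 := hμsle i hi _ (hf ((i:ℝ)/N))
      linarith
    have hb' : choquet μs.v f ≤ b := hb ⟨μs, hμs, rfl⟩
    -- chain of estimates
    set F : ℕ → ℝ := fun i => μs.v (f ⁻¹' Set.Ioi ((i:ℝ)/N)) with hF
    have hF1 : ∀ i : ℕ, μs.v (f ⁻¹' Set.Ioi (((i:ℝ)+1)/N)) = F (i+1) := by
      intro i; rw [hF]; push_cast; ring_nf
    have s1 : choquet ν.v f
        ≤ ∑ i ∈ Finset.range N, (1/(N:ℝ)) * ν.v (f ⁻¹' Set.Ioi ((i:ℝ)/N)) :=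
      riemann_upper (hanti ν) hN
    have s2 : ∑ i ∈ Finset.range N, (1/(N:ℝ)) * ν.v (f ⁻¹' Set.Ioi ((i:ℝ)/N))
        ≤ (∑ i ∈ Finset.range N, (1/(N:ℝ)) * F i) + (ε/2) := by
      have hstep : ∑ i ∈ Finset.range N, (1/(N:ℝ)) * ν.v (f ⁻¹' Set.Ioi ((i:ℝ)/N))
          ≤ ∑ i ∈ Finset.range N, ((1/(N:ℝ)) * F i + (1/(N:ℝ)) * (ε/2)) := by
        refine Finset.sum_le_sum fun i hi => ?_
        have h := hpt i (Finset.mem_range.mp hi)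
        have h1N : (0:ℝ) ≤ 1/(N:ℝ) := by positivity
        have : (1/(N:ℝ)) * ν.v (f ⁻¹' Set.Ioi ((i:ℝ)/N))
            ≤ (1/(N:ℝ)) * (μs.v (f ⁻¹' Set.Ioi ((i:ℝ)/N)) + (ε/2)) :=
          mul_le_mul_of_nonneg_left h h1N
        rw [hF]; dsimp only; linarith
      have hconst : ∑ _i ∈ Finset.range N, (1/(N:ℝ)) * (ε/2) = (ε/2) := by
        rw [Finset.sum_const, Finset.card_range, nsmul_eq_mul]
        field_simp
      rw [Finset.sum_add_distrib, hconst] at hstep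
      exact hstep
    have s3 : (∑ i ∈ Finset.range N, (1/(N:ℝ)) * F i)
        ≤ (∑ i ∈ Finset.range N, (1/(N:ℝ)) * F (i+1)) + 1/(N:ℝ) := by
      have key : ∑ i ∈ Finset.range N, ((1/(N:ℝ)) * F i - (1/(N:ℝ)) * F (i+1))
          = (1/(N:ℝ)) * (F 0 - F N) := by
        simp_rw [← mul_sub]
        rw [← Finset.mul_sum, Finset.sum_range_sub' F N]
      have h01 : F 0 - F N ≤ 1 := by
        have := hg1 μs (((0:ℕ):ℝ)/N)
        have := hg0 μs (((N:ℕ):ℝ)/N)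
        rw [hF]; dsimp only; linarith
      have hmul : (1/(N:ℝ)) * (F 0 - F N) ≤ (1/(N:ℝ)) * 1 :=
        mul_le_mul_of_nonneg_left h01 (by positivity)
      have hsplit : ∑ i ∈ Finset.range N, (1/(N:ℝ)) * F i
          = (∑ i ∈ Finset.range N, (1/(N:ℝ)) * F (i+1)) + (1/(N:ℝ)) * (F 0 - F N) := by
        rw [← key, Finset.sum_sub_distrib]; ring
      rw [hsplit]; linarith
    have s4 : (∑ i ∈ Finset.range N, (1/(N:ℝ)) * F (i+1)) ≤ choquet μs.v f := by
      have := riemann_lower (hanti μs) hN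
      have hcong : ∑ i ∈ Finset.range N, (1/(N:ℝ)) * μs.v (f ⁻¹' Set.Ioi (((i:ℝ)+1)/N))
          = ∑ i ∈ Finset.range N, (1/(N:ℝ)) * F (i+1) := by
        refine Finset.sum_congr rfl fun i _ => ?_
        rw [hF1 i]
      rw [hcong] at this
      exact this
    calc choquet ν.v f ≤ (∑ i ∈ Finset.range N, (1/(N:ℝ)) * F i) + (ε/2) := s1.trans s2
      _ ≤ (∑ i ∈ Finset.range N, (1/(N:ℝ)) * F (i+1)) + 1/(N:ℝ) + (ε/2) := by linarith
      _ ≤ choquet μs.v f + 1/(N:ℝ) + (ε/2) := by linarith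
      _ ≤ b + ε := by linarith
end

section
/- Finite convex sums in a pointed barycentric algebra are invariant under permutation of indices: for elements a₁,…,aₙ, coefficients r₁,…,rₙ ∈ [0,1] with Σ rᵢ ≤ 1, and any permutation π of {1,…,n}, Σᵢ rᵢ aᵢ = Σᵢ r_{π(i)} a_{π(i)}. -/
/-- A pointed barycentric algebra: binary operations `a +_r b` for `r ∈ [0,1]`
satisfying the barycentric axioms, together with a distinguished element `⊥`. -/
structure PBA (K : Type*) where
  add : ℝ → K → K → K
  bot : K
  add_one : ∀ a b : K, add 1 a b = a
  add_comm : ∀ r : ℝ, r ∈ Set.Icc (0:ℝ) 1 → ∀ a b : K, add r a b = add (1 - r) b a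
  add_idem : ∀ r : ℝ, r ∈ Set.Icc (0:ℝ) 1 → ∀ a : K, add r a a = a
  add_assoc : ∀ p r : ℝ, p ∈ Set.Ico (0:ℝ) 1 → r ∈ Set.Ico (0:ℝ) 1 → ∀ a b c : K,
    add r (add p a b) c = add (p * r) a (add ((r - p * r) / (1 - p * r)) b c)

open Classical in
/-- The finite convex sum `Σᵢ rᵢ aᵢ` in a pointed barycentric algebra, defined
recursively: the empty sum is `⊥`; `Σ = a₁` if `r₁ = 1`, and
`a₁ +_{r₁} (Σᵢ≥₂ (rᵢ/(1−r₁)) aᵢ)` otherwise. -/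
noncomputable def PBA.csum {K : Type*} (P : PBA K) : List (ℝ × K) → K
  | [] => P.bot
  | (r, a) :: t =>
      if r = 1 then a
      else P.add r a (P.csum (t.map fun p => (p.1 / (1 - r), p.2)))
termination_by l => l.length
decreasing_by simp only [List.length_map, List.length_cons, List.length_attach]; omega

/-! Adjacent transpositions are handled by the left-commutativity
`a +_r (b +_{s/(1-r)} x) = b +_s (a +_{r/(1-s)} x)`, which follows from associativity by
regrouping both sides as `(a +_{r/(r+s)} b) +_{r+s} x`. Arbitrary permutations follow by
induction on `List.Perm`; since the recursion renormalises the tail, the induction is run for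
weights divided by an arbitrary total `c` bounding their sum. -/

noncomputable def divWeights {K : Type*} (l : List (ℝ × K)) (c : ℝ) : List (ℝ × K) :=
  l.map fun p => (p.1 / c, p.2)

section divWeights

variable {K : Type*}

@[simp]
lemma divWeights_cons (r : ℝ) (a : K) (t : List (ℝ × K)) (c : ℝ) :
    divWeights ((r, a) :: t) c = (r / c, a) :: divWeights t c := rfl

lemma divWeights_one (l : List (ℝ × K)) : divWeights l 1 = l := by
  simp [divWeights]

lemma divWeights_divWeights (l : List (ℝ × K)) (c d : ℝ) :
    divWeights (divWeights l c) d = divWeights l (c * d) := by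
  simp [divWeights, div_div]

end divWeights

namespace PBA

variable {K : Type*} (P : PBA K)

lemma add_zero (a b : K) : P.add 0 a b = b := by
  rw [P.add_comm 0 (by norm_num), sub_zero, P.add_one]

lemma add_add_eq_add_add {r s : ℝ} (hr : 0 < r) (hs : 0 < s) (hrs : r + s < 1) (a b x : K) :
    P.add r a (P.add (s / (1 - r)) b x) = P.add (r + s) (P.add (r / (r + s)) a b) x := by
  have hrs₀ : 0 < r + s := by linarith
  rw [P.add_assoc (r / (r + s)) (r + s)
    ⟨by positivity, (div_lt_one hrs₀).2 (by linarith)⟩ ⟨hrs₀.le, hrs⟩,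
    div_mul_cancel₀ r hrs₀.ne', add_sub_cancel_left]

lemma add_left_comm {r s : ℝ} (hr : 0 ≤ r) (hs : 0 ≤ s) (hrs : r + s < 1) (a b x : K) :
    P.add r a (P.add (s / (1 - r)) b x) = P.add s b (P.add (r / (1 - s)) a x) := by
  rcases hr.eq_or_lt with rfl | hr
  · simp only [P.add_zero, zero_div, sub_zero, div_one]
  rcases hs.eq_or_lt with rfl | hs
  · simp only [P.add_zero, zero_div, sub_zero, div_one]
  have hrs₀ : 0 < r + s := by linarith
  have hcompl : 1 - r / (r + s) = s / (r + s) := by field_simp; ring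
  rw [P.add_add_eq_add_add hr hs hrs, P.add_add_eq_add_add hs hr (by linarith), _root_.add_comm s r,
    P.add_comm (r / (r + s)) ⟨by positivity, (div_le_one hrs₀).2 (by linarith)⟩, hcompl]

lemma csum_cons_one (a : K) (t : List (ℝ × K)) : P.csum ((1, a) :: t) = a := by
  rw [csum, if_pos rfl]

lemma csum_cons_of_ne_one {r : ℝ} (hr : r ≠ 1) (a : K) (t : List (ℝ × K)) :
    P.csum ((r, a) :: t) = P.add r a (P.csum (divWeights t (1 - r))) := by
  rw [csum, if_neg hr, divWeights]

lemma csum_cons_cons_of_add_eq_one {r s : ℝ} (hrs : r + s = 1) (a b : K) (t : List (ℝ × K)) :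
    P.csum ((r, a) :: (s, b) :: t) = P.add r a b := by
  rcases eq_or_ne r 1 with rfl | hr
  · rw [csum_cons_one, add_one]
  have hs : s / (1 - r) = 1 := by rw [div_eq_one_iff_eq (sub_ne_zero.2 hr.symm)]; linarith
  rw [csum_cons_of_ne_one P hr, divWeights_cons, hs, csum_cons_one]

lemma csum_cons_cons {r s : ℝ} (hr : r ≠ 1) (hrs : r + s ≠ 1) (a b : K) (t : List (ℝ × K)) :
    P.csum ((r, a) :: (s, b) :: t) =
      P.add r a (P.add (s / (1 - r)) b (P.csum (divWeights t (1 - (r + s))))) := by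
  have h₁ : 1 - r ≠ 0 := sub_ne_zero.2 hr.symm
  have hs : s / (1 - r) ≠ 1 := by
    rw [Ne, div_eq_one_iff_eq h₁]; contrapose! hrs; linarith
  have hmul : (1 - r) * (1 - s / (1 - r)) = 1 - (r + s) := by field_simp; ring
  rw [csum_cons_of_ne_one P hr, divWeights_cons, csum_cons_of_ne_one P hs,
    divWeights_divWeights, hmul]

lemma csum_swap {r s : ℝ} (hr : 0 ≤ r) (hs : 0 ≤ s) (hrs : r + s ≤ 1) (a b : K)
    (t : List (ℝ × K)) :
    P.csum ((r, a) :: (s, b) :: t) = P.csum ((s, b) :: (r, a) :: t) := by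
  rcases hrs.lt_or_eq with hlt | heq
  · rw [P.csum_cons_cons (by linarith) hlt.ne, P.csum_cons_cons (by linarith) (by linarith),
      _root_.add_comm s r, P.add_left_comm hr hs hlt]
  · rw [P.csum_cons_cons_of_add_eq_one heq, P.csum_cons_cons_of_add_eq_one (by linarith),
      P.add_comm r ⟨hr, by linarith⟩, show 1 - r = s by linarith]

lemma csum_divWeights_perm {l l' : List (ℝ × K)} (h : l.Perm l') {c : ℝ} (hc : 0 < c)
    (hl : ∀ p ∈ l, 0 ≤ p.1) (hsum : (l.map Prod.fst).sum ≤ c) :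
    P.csum (divWeights l c) = P.csum (divWeights l' c) := by
  have tail_nonneg : ∀ t : List (ℝ × K), (∀ p ∈ t, 0 ≤ p.1) → 0 ≤ (t.map Prod.fst).sum :=
    fun t ht => List.sum_nonneg (by simpa using ht)
  induction h generalizing c with
  | nil => rfl
  | @cons x l₁ l₂ h ih =>
    obtain ⟨r, a⟩ := x
    simp only [List.forall_mem_cons, List.map_cons, List.sum_cons] at hl hsum
    have hσ := tail_nonneg l₁ hl.2
    rw [divWeights_cons, divWeights_cons]
    rcases eq_or_ne (r / c) 1 with hrc | hrc
    · rw [hrc, csum_cons_one, csum_cons_one]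
    have hcr : c * (1 - r / c) = c - r := by field_simp
    have hrc' : r < c := lt_of_le_of_ne (by linarith) (fun h => hrc (by rw [h, div_self hc.ne']))
    rw [csum_cons_of_ne_one P hrc, csum_cons_of_ne_one P hrc, divWeights_divWeights,
      divWeights_divWeights, hcr, ih (by linarith) hl.2 (by linarith)]
  | @swap x y t =>
    obtain ⟨s, b⟩ := x
    obtain ⟨r, a⟩ := y
    simp only [List.forall_mem_cons, List.map_cons, List.sum_cons] at hl hsum
    have hσ := tail_nonneg t hl.2.2
    simp only [divWeights_cons]
    refine P.csum_swap (div_nonneg hl.1 hc.le) (div_nonneg hl.2.1 hc.le) ?_ _ _ _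
    rw [← add_div, div_le_one hc]
    linarith
  | trans h₁ _ ih₁ ih₂ =>
    exact (ih₁ hc hl hsum).trans (ih₂ hc (fun p hp => hl p (h₁.mem_iff.2 hp))
      ((h₁.map Prod.fst).sum_eq ▸ hsum))

end PBA

/-- Finite convex sums in a pointed barycentric algebra are invariant under
permutation of the indices. -/
theorem csum_perm_invariant {K : Type*} (P : PBA K)
    (l l' : List (ℝ × K)) (hperm : l.Perm l')
    (hr : ∀ p ∈ l, p.1 ∈ Set.Icc (0:ℝ) 1)
    (hsum : (l.map Prod.fst).sum ≤ 1) :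
    P.csum l = P.csum l' := by
  simpa only [divWeights_one] using
    P.csum_divWeights_perm hperm one_pos (fun p hp => (hr p hp).1) hsum
end

section
/- The map φ from the lift monad to a valuations monad, sending ⊥ to the zero valuation and a non-bottom element x to the Dirac valuation δ_x, is a map of monads: it is natural, commutes with the units (φ ∘ η^L = η^V), and commutes with the multiplications (φ ∘ μ^L = μ^V ∘ V(φ) ∘ φ at each lifted object). -/
open Classical in
/-- The Dirac valuation of a point, as a set-function. -/
noncomputable def diracF {α : Type*} (x : α) : Set α → ℝ :=
  fun U => if x ∈ U then 1 else 0

open Classical in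
/-- The component of the map `φ` from the lift monad to the valuations monad:
`⊥` goes to the constantly-zero valuation and `x ≠ ⊥` to the Dirac valuation
`δ_x` (given here at the level of underlying set-functions). -/
noncomputable def phiv {α : Type*} (w : WithBot α) : Set α → ℝ :=
  WithBot.recBotCoe (fun _ => 0) (fun x U => if x ∈ U then 1 else 0) w


open Classical MeasureTheory in
lemma phi_aux_integral (c : ℝ) (hc : c = 0 ∨ c = 1) :
    ∫ t in (0:ℝ)..1, (if t < c then (1:ℝ) else 0) = c := by
  have h : ∀ t : ℝ, (if t < c then (1:ℝ) else 0)
      = (Set.Iio c).indicator (fun _ => (1:ℝ)) t := by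
    intro t; simp [Set.indicator_apply]
  simp_rw [h]
  rw [intervalIntegral.integral_of_le zero_le_one,
    MeasureTheory.integral_indicator measurableSet_Iio]
  rcases hc with rfl | rfl
  · rw [setIntegral_const, smul_eq_mul, mul_one, measureReal_def,
      Measure.restrict_apply measurableSet_Iio]
    rw [show Set.Iio (0:ℝ) ∩ Set.Ioc 0 1 = ∅ by
      ext t; simp; intro h1 h2; linarith]
    simp
  · rw [setIntegral_const, smul_eq_mul, mul_one, measureReal_def,
      Measure.restrict_apply measurableSet_Iio]
    rw [show Set.Iio (1:ℝ) ∩ Set.Ioc 0 1 = Set.Ioo 0 1 by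
      ext t; simp only [Set.mem_inter_iff, Set.mem_Iio, Set.mem_Ioc, Set.mem_Ioo]
      constructor
      · rintro ⟨h1, h2, h3⟩; exact ⟨h2, h1⟩
      · rintro ⟨h1, h2⟩; exact ⟨h2, h1, le_of_lt h2⟩]
    simp

open Classical in
/-- The zero valuation. -/
noncomputable def zeroSVal (α : Type*) [Preorder α] : SVal α where
  v := fun _ => 0
  nonneg := fun _ _ => le_refl 0
  le_one := fun _ _ => zero_le_one
  strict := rfl
  mono := fun _ _ _ _ _ => le_refl 0
  cont := fun D _ hD _ => by
    rw [Set.Nonempty.image_const hD 0, csSup_singleton]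
  modular := fun _ _ _ _ => rfl

open Classical in
/-- The Dirac valuation. -/
noncomputable def diracSVal {α : Type*} [Preorder α] (x : α) : SVal α where
  v := diracF x
  nonneg := fun U _ => by unfold diracF; split_ifs <;> norm_num
  le_one := fun U _ => by unfold diracF; split_ifs <;> norm_num
  strict := by simp [diracF]
  mono := fun U V _ _ hUV => by
    unfold diracF
    by_cases hx : x ∈ U
    · rw [if_pos hx, if_pos (hUV hx)]
    · rw [if_neg hx]; split_ifs <;> norm_num
  cont := fun D _ hD _ => by
    unfold diracF
    by_cases hx : x ∈ ⋃₀ D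
    · rw [if_pos hx]
      obtain ⟨U, hU, hxU⟩ := hx
      have hmem : (1:ℝ) ∈ (fun U => if x ∈ U then (1:ℝ) else 0) '' D :=
        ⟨U, hU, by dsimp only; rw [if_pos hxU]⟩
      have hbdd : ∀ y ∈ (fun U => if x ∈ U then (1:ℝ) else 0) '' D, y ≤ 1 := by
        rintro y ⟨V, _, rfl⟩; dsimp only; split_ifs <;> norm_num
      exact le_antisymm (le_csSup ⟨1, hbdd⟩ hmem)
        (csSup_le ⟨1, hmem⟩ hbdd)
    · rw [if_neg hx]
      have himg : (fun U => if x ∈ U then (1:ℝ) else 0) '' D = {0} := by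
        apply Set.eq_singleton_iff_nonempty_unique_mem.mpr
        refine ⟨hD.image _, ?_⟩
        rintro y ⟨V, hV, rfl⟩
        dsimp only; rw [if_neg (fun hxV => hx ⟨V, hV, hxV⟩)]
      rw [himg, csSup_singleton]
  modular := fun U V _ _ => by
    unfold diracF
    by_cases hU : x ∈ U <;> by_cases hV : x ∈ V <;>
      simp [hU, hV, Set.mem_union, Set.mem_inter_iff]

/-- `φ` is a map of monads from the lift monad `L` (adding a least element) to
the valuations monad `V`: each `φ(w)` is a subprobability valuation, `φ` is
natural (it intertwines `L h = WithBot.map h` with the pushforward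
`V(h)(ν) = λU. ν(h⁻¹U)`), it commutes with the units (`φ ∘ η^L = η^V`, i.e.
`φ(x) = δ_x`), and it commutes with the multiplications
(`φ ∘ μ^L = μ^V ∘ V(φ) ∘ φ`, where `μ^V(ϖ)(U) = ∫ ν(U) dϖ` is a Choquet
integral and `μ^L` collapses the two bottoms). -/
theorem phi_map_of_monads {X Y : Type*} [PartialOrder X] [PartialOrder Y]
    (hX : IsDcpo X) (hY : IsDcpo Y) :
    (∀ w : WithBot X, ∃ ν : SVal X, ν.v = phiv w) ∧
    (∀ x : X, phiv (x : WithBot X) = diracF x) ∧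
    (∀ h : X → Y, ScottContinuous h →
      ∀ (w : WithBot X) (U : Set Y), ScottOpen U →
        phiv (WithBot.map h w) U = phiv w (h ⁻¹' U)) ∧
    (∀ (w : WithBot (WithBot X)) (U : Set X), ScottOpen U →
      phiv (WithBot.recBotCoe ⊥ id w) U =
        ∫ t in (0:ℝ)..1, phiv w {w' : WithBot X | t < phiv w' U}) := by
  refine ⟨?_, ?_, ?_, ?_⟩
  · intro w
    induction w using WithBot.recBotCoe with
    | bot => exact ⟨zeroSVal X, rfl⟩
    | coe x => exact ⟨diracSVal x, rfl⟩
  · intro x; rfl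
  · intro h _ w U _
    induction w using WithBot.recBotCoe with
    | bot => rfl
    | coe x => rfl
  · intro w U _
    induction w using WithBot.recBotCoe with
    | bot => simp [phiv]
    | coe w' =>
      have hstep : ∀ t : ℝ, phiv (↑w' : WithBot (WithBot X))
          {w'' : WithBot X | t < phiv w'' U}
          = if t < phiv w' U then (1:ℝ) else 0 := by
        intro t; simp [phiv, Set.mem_setOf_eq]; congr
      show phiv w' U = _
      simp_rw [hstep]
      refine (phi_aux_integral _ ?_).symm
      induction w' using WithBot.recBotCoe with
      | bot => left; rfl
      | coe x =>
        by_cases hx : x ∈ U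
        · right; simp [phiv, hx]
        · left; simp [phiv, hx]
end

section
/- In a Scott-continuous setting, preservation of Scott-closed sets extends through closures: let Y be a dcpo, {Xᵢ}_{i∈F} a finite family of dcpo's, f : Πᵢ Xᵢ → Y Scott-continuous, C_Y ⊆ Y Scott-closed, and Uᵢ ⊆ Xᵢ arbitrary subsets with f(Πᵢ Uᵢ) ⊆ C_Y. Then f(Πᵢ Ūᵢ) ⊆ C_Y, where Ūᵢ is the Scott closure of Uᵢ in Xᵢ. -/
lemma directedOn_image_of_monotone' {α β : Type*} [Preorder α] [Preorder β]
    {g : α → β} (hg : Monotone g) {d : Set α} (hd : DirectedOn (· ≤ ·) d) :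
    DirectedOn (· ≤ ·) (g '' d) := by
  rintro _ ⟨a, ha, rfl⟩ _ ⟨b, hb, rfl⟩
  obtain ⟨c, hc, hac, hbc⟩ := hd a ha b hb
  exact ⟨g c, ⟨c, hc, rfl⟩, hg hac, hg hbc⟩

lemma monotone_update' {ι : Type*} [DecidableEq ι] {X : ι → Type*}
    [∀ i, PartialOrder (X i)] (x : ∀ i, X i) (j : ι) :
    Monotone (Function.update x j) := by
  intro a b hab i
  by_cases hij : i = j
  · subst hij; simpa using hab
  · simp [Function.update_of_ne hij]

lemma isLUB_update' {ι : Type*} [DecidableEq ι] {X : ι → Type*}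
    [∀ i, PartialOrder (X i)] (x : ∀ i, X i) (j : ι) {d : Set (X j)} {m : X j}
    (hd : d.Nonempty) (h : IsLUB d m) :
    IsLUB (Function.update x j '' d) (Function.update x j m) := by
  constructor
  · rintro _ ⟨t, ht, rfl⟩
    exact monotone_update' x j (h.1 ht)
  · intro b hb i
    by_cases hij : i = j
    · subst hij
      simp only [Function.update_self]
      refine h.2 fun t ht => ?_
      have := hb ⟨t, ht, rfl⟩ i
      simpa using this
    · obtain ⟨t, ht⟩ := hd
      have := hb ⟨t, ht, rfl⟩ i
      simpa [Function.update_of_ne hij] using this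

/-- Preservation of Scott-closed sets extends through Scott closures: if a
Scott-continuous `f` from a finite product of dcpo's to a dcpo `Y` maps
`Πᵢ Uᵢ` into a Scott-closed set `C`, then `f` maps the product of the Scott
closures of the `Uᵢ` into `C`. -/
theorem scott_closed_image_closure {ι : Type*} [Finite ι]
    {X : ι → Type*} [∀ i, PartialOrder (X i)] {Y : Type*} [PartialOrder Y]
    (hX : ∀ i, IsDcpo (X i)) (hY : IsDcpo Y)
    (f : (∀ i, X i) → Y) (hf : ScottContinuous f)
    (C : Set Y) (hC : ScottOpen Cᶜ)
    (U : ∀ i, Set (X i))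
    (hU : ∀ x : ∀ i, X i, (∀ i, x i ∈ U i) → f x ∈ C) :
    ∀ x : ∀ i, X i,
      (∀ i, ∀ T : Set (X i), ScottOpen Tᶜ → U i ⊆ T → x i ∈ T) → f x ∈ C := by
  classical
  have key : ∀ s : Set ι, s.Finite →
      ∀ x : ∀ i, X i,
        (∀ i ∈ s, ∀ T : Set (X i), ScottOpen Tᶜ → U i ⊆ T → x i ∈ T) →
        (∀ i, i ∉ s → x i ∈ U i) → f x ∈ C := by
    intro s hs
    refine Set.Finite.induction_on s hs ?_ ?_
    · intro x _ h2
      exact hU x fun i => h2 i (by simp)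
    · intro j s hj _ ih
      intro x h1 h2
      set T : Set (X j) := {t | f (Function.update x j t) ∈ C} with hT
      have hclosed : ScottOpen Tᶜ := by
        constructor
        · intro a b hab ha hb
          exact (hC.1 (hf.monotone (monotone_update' x j hab)) ha) hb
        · intro d hdne hdir m hm hmT
          have hdir' : DirectedOn (· ≤ ·) (Function.update x j '' d) :=
            directedOn_image_of_monotone' (monotone_update' x j) hdir
          have hflub := hf (hdne.image _) hdir' (isLUB_update' x j hdne hm)
          obtain ⟨_, ⟨_, ⟨t, ht, rfl⟩, rfl⟩, hy⟩ :=
            hC.2 (f '' (Function.update x j '' d)) ((hdne.image _).image f)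
              (directedOn_image_of_monotone' hf.monotone hdir') _ hflub hmT
          exact ⟨t, ht, hy⟩
      have hUT : U j ⊆ T := by
        intro t ht
        refine ih (Function.update x j t) ?_ ?_
        · intro i hi Ti hTi hUTi
          have hij : i ≠ j := ne_of_mem_of_not_mem hi hj
          rw [Function.update_of_ne hij]
          exact h1 i (Set.mem_insert_of_mem _ hi) Ti hTi hUTi
        · intro i hi
          by_cases hij : i = j
          · subst hij; simpa using ht
          · rw [Function.update_of_ne hij]
            exact h2 i (by simp [hij, hi])
      have := h1 j (Set.mem_insert j s) T hclosed hUT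
      simpa [hT, Function.update_eq_self] using this
  intro x hx
  exact key Set.univ Set.finite_univ x (fun i _ => hx i)
    (fun i hi => absurd (Set.mem_univ i) hi)
end
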